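/- arXiv:1702.02300 — 7 statements merged into one kernel-verified Lean document; each statement's English description precedes it below -/
import Mathlib

section
/- The full segmentation functional E attains its infimum: there exist a label assignment u* : G → Δ_K, a codebook c* ∈ ℝ^K and a log-illumination l* : G → ℝ such that E(u*,c*,l*) = inf { E(u,c,l) : u : G → ℝ^K with u(j) ∈ Δ_K for all j ∈ G, c ∈ ℝ^K, l : G → ℝ }. -/
open Finset

noncomputable section

/-- Discrete gradient with forward differences and mirror boundary conditions. -/
def grad {d : ℕ} (n : Fin d → ℕ) (F : (∀ i, Fin (n i)) → ℝ)
    (j : ∀ i, Fin (n i)) (i : Fin d) : ℝ :=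
  if h : (j i : ℕ) + 1 < n i then F (Function.update j i ⟨(j i : ℕ) + 1, h⟩) - F j else 0

/-- Isotropic discrete total variation. -/
def tv {d : ℕ} (n : Fin d → ℕ) (F : (∀ i, Fin (n i)) → ℝ) : ℝ :=
  ∑ j, Real.sqrt (∑ i, grad n F j i ^ 2)

/-- The label assignment `u` takes values in the probability simplex `Δ_K`. -/
def inSimplex {G : Type*} [Fintype G] {K : ℕ} (u : G → Fin K → ℝ) : Prop :=
  ∀ j, (∀ k, 0 ≤ u j k) ∧ ∑ k, u j k = 1

/-- The segmentation functional `E(u,c,l)`. -/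
def segE {d K : ℕ} (n : Fin d → ℕ) (f : (∀ i, Fin (n i)) → ℝ)
    (lam : Fin K → ℝ) (γ : ℝ)
    (u : (∀ i, Fin (n i)) → Fin K → ℝ) (c : Fin K → ℝ) (l : (∀ i, Fin (n i)) → ℝ) : ℝ :=
  (∑ k, ∑ j, u j k * (f j - l j - c k) ^ 2)
    + (∑ k, lam k * tv n (fun j => u j k))
    + γ * ∑ j, ∑ i, grad n l j i ^ 2

lemma continuous_grad {d : ℕ} (n : Fin d → ℕ) (j : ∀ i, Fin (n i)) (i : Fin d) :
    Continuous fun F : (∀ i, Fin (n i)) → ℝ => grad n F j i := by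
  unfold grad
  by_cases h : (j i : ℕ) + 1 < n i
  · simp only [dif_pos h]
    exact (continuous_apply _).sub (continuous_apply _)
  · simp only [dif_neg h]
    exact continuous_const

lemma grad_sub_const {d : ℕ} (n : Fin d → ℕ) (l : (∀ i, Fin (n i)) → ℝ) (t : ℝ)
    (j : ∀ i, Fin (n i)) (i : Fin d) :
    grad n (fun j' => l j' - t) j i = grad n l j i := by
  unfold grad
  split_ifs <;> ring

lemma clamp_sq {M a x : ℝ} (ha : |a| ≤ M) :
    (a - max (-M) (min M x)) ^ 2 ≤ (a - x) ^ 2 := by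
  rcases abs_le.mp ha with ⟨h1, h2⟩
  rcases le_total x M with hx | hx
  · rcases le_total (-M) x with hx2 | hx2
    · rw [min_eq_right hx, max_eq_right hx2]
    · rw [min_eq_right (hx2.trans (neg_le_self (by linarith))), max_eq_left hx2]
      nlinarith
  · rw [min_eq_left hx, max_eq_right (neg_le_self (by linarith))]
    nlinarith

lemma bound_by_grad {d : ℕ} (n : Fin d → ℕ) (hn : ∀ i, 0 < n i)
    (l : (∀ i, Fin (n i)) → ℝ) (B : ℝ) (hB : 0 ≤ B)
    (hg : ∀ j i, |grad n l j i| ≤ B)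
    (h0 : l (fun i => ⟨0, hn i⟩) = 0) :
    ∀ j, |l j| ≤ (∑ i, (j i : ℕ) : ℕ) * B := by
  suffices H : ∀ m (j : ∀ i, Fin (n i)), (∑ i, (j i : ℕ)) = m → |l j| ≤ (m : ℝ) * B by
    intro j; exact H _ j rfl
  intro m
  induction m with
  | zero =>
    intro j hj
    have hj0 : j = fun i => ⟨0, hn i⟩ := by
      funext i
      have := (Finset.sum_eq_zero_iff).mp hj i (Finset.mem_univ i)
      exact Fin.ext this
    rw [hj0, h0]; simp
  | succ m ih =>
    intro j hj
    have hex : ∃ i, 0 < (j i : ℕ) := by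
      by_contra hcon
      push_neg at hcon
      have : ∑ i, (j i : ℕ) = 0 := Finset.sum_eq_zero fun i _ => Nat.le_zero.mp (hcon i)
      omega
    obtain ⟨i, hi⟩ := hex
    have hji : (j i : ℕ) - 1 < n i := lt_of_le_of_lt (Nat.sub_le _ _) (j i).isLt
    set j' := Function.update j i ⟨(j i : ℕ) - 1, hji⟩ with hj'def
    have hj'i : (j' i : ℕ) = (j i : ℕ) - 1 := by simp [hj'def]
    have hup : (j' i : ℕ) + 1 < n i := by rw [hj'i]; omega
    have hgr : grad n l j' i = l j - l j' := by
      unfold grad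
      rw [dif_pos hup]
      congr 2
      funext i'
      by_cases hii : i' = i
      · subst hii
        simp only [Function.update_self, hj'def]
        exact Fin.ext (by simp; omega)
      · simp [hj'def, Function.update_of_ne hii]
    have hsum : ∑ i', (j' i' : ℕ) = m := by
      have e1 : ∑ i', (j' i' : ℕ) = (j' i : ℕ) + ∑ i' ∈ Finset.univ.erase i, (j' i' : ℕ) :=
        (Finset.add_sum_erase _ _ (Finset.mem_univ i)).symm
      have e2 : ∑ i', (j i' : ℕ) = (j i : ℕ) + ∑ i' ∈ Finset.univ.erase i, (j i' : ℕ) :=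
        (Finset.add_sum_erase _ _ (Finset.mem_univ i)).symm
      have e3 : ∑ i' ∈ Finset.univ.erase i, (j' i' : ℕ) = ∑ i' ∈ Finset.univ.erase i, (j i' : ℕ) :=
        Finset.sum_congr rfl fun i' hi' => by
          simp [hj'def, Function.update_of_ne (Finset.mem_erase.mp hi').1]
      omega
    have hIH := ih j' hsum
    have : l j = grad n l j' i + l j' := by rw [hgr]; ring
    rw [this]
    calc |grad n l j' i + l j'| ≤ |grad n l j' i| + |l j'| := abs_add_le _ _
      _ ≤ B + (m : ℝ) * B := add_le_add (hg j' i) hIH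
      _ = ((m + 1 : ℕ) : ℝ) * B := by push_cast; ring

lemma segE_nonneg {d K : ℕ} (n : Fin d → ℕ) (f : (∀ i, Fin (n i)) → ℝ)
    (lam : Fin K → ℝ) (hlam : ∀ k, 0 < lam k) (γ : ℝ) (hγ : 0 < γ)
    (u : (∀ i, Fin (n i)) → Fin K → ℝ) (c : Fin K → ℝ) (l : (∀ i, Fin (n i)) → ℝ)
    (hu : inSimplex u) : 0 ≤ segE n f lam γ u c l := by
  unfold segE
  have h1 : 0 ≤ ∑ k, ∑ j, u j k * (f j - l j - c k) ^ 2 :=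
    Finset.sum_nonneg fun k _ => Finset.sum_nonneg fun j _ =>
      mul_nonneg ((hu j).1 k) (sq_nonneg _)
  have h2 : 0 ≤ ∑ k, lam k * tv n (fun j => u j k) :=
    Finset.sum_nonneg fun k _ => mul_nonneg (hlam k).le
      (Finset.sum_nonneg fun j _ => Real.sqrt_nonneg _)
  have h3 : 0 ≤ γ * ∑ j, ∑ i, grad n l j i ^ 2 :=
    mul_nonneg hγ.le (Finset.sum_nonneg fun j _ => Finset.sum_nonneg fun i _ => sq_nonneg _)
  linarith

lemma continuous_segE {d K : ℕ} (n : Fin d → ℕ) (f : (∀ i, Fin (n i)) → ℝ)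
    (lam : Fin K → ℝ) (γ : ℝ) :
    Continuous fun x : ((∀ i, Fin (n i)) → Fin K → ℝ) × (Fin K → ℝ) × ((∀ i, Fin (n i)) → ℝ) =>
      segE n f lam γ x.1 x.2.1 x.2.2 := by
  unfold segE tv
  apply Continuous.add
  apply Continuous.add
  · apply continuous_finset_sum; intro k _
    apply continuous_finset_sum; intro j _
    apply Continuous.mul
    · exact (continuous_apply k).comp ((continuous_apply j).comp continuous_fst)
    · apply Continuous.pow
      apply Continuous.sub
      apply Continuous.sub continuous_const
      · exact (continuous_apply j).comp (continuous_snd.comp continuous_snd)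
      · exact (continuous_apply k).comp (continuous_fst.comp continuous_snd)
  · apply continuous_finset_sum; intro k _
    apply Continuous.mul continuous_const
    apply continuous_finset_sum; intro j _
    have hcu : Continuous fun x : ((∀ i, Fin (n i)) → Fin K → ℝ) × (Fin K → ℝ) ×
        ((∀ i, Fin (n i)) → ℝ) => (fun j' => x.1 j' k) :=
      continuous_pi fun j' => (continuous_apply k).comp ((continuous_apply j').comp continuous_fst)
    exact Real.continuous_sqrt.comp (continuous_finset_sum _ fun i _ =>
      ((continuous_grad n j i).comp hcu).pow 2)
  · apply Continuous.mul continuous_const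
    apply continuous_finset_sum; intro j _
    apply continuous_finset_sum; intro i _
    exact ((continuous_grad n j i).comp (continuous_snd.comp continuous_snd)).pow 2

theorem segE_attains_inf (d K : ℕ) (hd : 1 ≤ d) (hK : 1 ≤ K)
    (n : Fin d → ℕ) (hn : ∀ i, 0 < n i)
    (f : (∀ i, Fin (n i)) → ℝ) (lam : Fin K → ℝ) (hlam : ∀ k, 0 < lam k)
    (γ : ℝ) (hγ : 0 < γ) :
    ∃ (u : (∀ i, Fin (n i)) → Fin K → ℝ) (c : Fin K → ℝ) (l : (∀ i, Fin (n i)) → ℝ),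
      inSimplex u ∧
      segE n f lam γ u c l
        = sInf {y : ℝ | ∃ u' c' l', inSimplex u' ∧ segE n f lam γ u' c' l' = y} := by
  classical
  set S : Set ℝ := {y : ℝ | ∃ u' c' l', inSimplex u' ∧ segE n f lam γ u' c' l' = y} with hS
  let Φ : (((∀ i, Fin (n i)) → Fin K → ℝ) × (Fin K → ℝ) × ((∀ i, Fin (n i)) → ℝ)) → ℝ :=
    fun x => segE n f lam γ x.1 x.2.1 x.2.2
  let j₀ : ∀ i, Fin (n i) := fun i => ⟨0, hn i⟩
  let k₀ : Fin K := ⟨0, hK⟩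
  let u₀ : (∀ i, Fin (n i)) → Fin K → ℝ := fun _ k => if k = k₀ then 1 else 0
  have hu₀ : inSimplex u₀ := by
    intro j
    constructor
    · intro k; dsimp only [u₀]; split <;> norm_num
    · simp [u₀]
  set E₀ := segE n f lam γ u₀ 0 0 with hE₀def
  have hE₀ : 0 ≤ E₀ := segE_nonneg n f lam hlam γ hγ u₀ 0 0 hu₀
  set B := Real.sqrt (E₀ / γ) with hBdef
  have hB : 0 ≤ B := Real.sqrt_nonneg _
  set M₁ := (∑ i, (n i : ℝ)) * B with hM₁def
  have hM₁ : 0 ≤ M₁ := mul_nonneg (Finset.sum_nonneg fun i _ => by positivity) hB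
  set Mf := ∑ j, |f j| with hMfdef
  have hMf : ∀ j, |f j| ≤ Mf := fun j => by
    rw [hMfdef]
    exact Finset.single_le_sum (f := fun j' => |f j'|) (fun j' _ => abs_nonneg _)
      (Finset.mem_univ j)
  have hMf0 : 0 ≤ Mf := Finset.sum_nonneg fun j _ => abs_nonneg _
  set M := Mf + M₁ with hMdef
  have hM0 : 0 ≤ M := add_nonneg hMf0 hM₁
  have hM₁M : M₁ ≤ M := le_add_of_nonneg_left hMf0
  set A : Set (((∀ i, Fin (n i)) → Fin K → ℝ) × (Fin K → ℝ) × ((∀ i, Fin (n i)) → ℝ)) :=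
    {x | inSimplex x.1 ∧ (∀ k, |x.2.1 k| ≤ M) ∧ (∀ j, |x.2.2 j| ≤ M)} with hAdef
  have hx₀A : (⟨u₀, 0, 0⟩ : ((∀ i, Fin (n i)) → Fin K → ℝ) × (Fin K → ℝ) ×
      ((∀ i, Fin (n i)) → ℝ)) ∈ A :=
    ⟨hu₀, fun k => by simpa using hM0, fun j => by simpa using hM0⟩
  have hAcomp : IsCompact A := by
    have hC : IsCompact ((Set.univ.pi fun _ : (∀ i, Fin (n i)) =>
          Set.univ.pi fun _ : Fin K => Set.Icc (0:ℝ) 1) ×ˢ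
        ((Set.univ.pi fun _ : Fin K => Set.Icc (-M) M) ×ˢ
          (Set.univ.pi fun _ : (∀ i, Fin (n i)) => Set.Icc (-M) M))) :=
      ((isCompact_univ_pi fun _ => isCompact_univ_pi fun _ => isCompact_Icc).prod
        ((isCompact_univ_pi fun _ => isCompact_Icc).prod
          (isCompact_univ_pi fun _ => isCompact_Icc)))
    apply hC.of_isClosed_subset
    · have h1 : IsClosed {x : ((∀ i, Fin (n i)) → Fin K → ℝ) × (Fin K → ℝ) ×
          ((∀ i, Fin (n i)) → ℝ) | inSimplex x.1} := by
        have he : {x : ((∀ i, Fin (n i)) → Fin K → ℝ) × (Fin K → ℝ) ×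
            ((∀ i, Fin (n i)) → ℝ) | inSimplex x.1} =
            ⋂ j, ((⋂ k, {x | 0 ≤ x.1 j k}) ∩ {x | ∑ k, x.1 j k = 1}) := by
          ext x
          simp only [Set.mem_setOf_eq, Set.mem_iInter, Set.mem_inter_iff, inSimplex]
        rw [he]
        refine isClosed_iInter fun j => IsClosed.inter (isClosed_iInter fun k => ?_) ?_
        · exact isClosed_le continuous_const
            ((continuous_apply k).comp ((continuous_apply j).comp continuous_fst))
        · exact isClosed_eq (continuous_finset_sum _ fun k _ =>
            (continuous_apply k).comp ((continuous_apply j).comp continuous_fst))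
            continuous_const
      have h2 : IsClosed {x : ((∀ i, Fin (n i)) → Fin K → ℝ) × (Fin K → ℝ) ×
          ((∀ i, Fin (n i)) → ℝ) | ∀ k, |x.2.1 k| ≤ M} := by
        have he : {x : ((∀ i, Fin (n i)) → Fin K → ℝ) × (Fin K → ℝ) ×
            ((∀ i, Fin (n i)) → ℝ) | ∀ k, |x.2.1 k| ≤ M} =
            ⋂ k, {x | |x.2.1 k| ≤ M} := by ext x; simp
        rw [he]
        exact isClosed_iInter fun k => isClosed_le
          (continuous_abs.comp ((continuous_apply k).comp (continuous_fst.comp continuous_snd)))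
          continuous_const
      have h3 : IsClosed {x : ((∀ i, Fin (n i)) → Fin K → ℝ) × (Fin K → ℝ) ×
          ((∀ i, Fin (n i)) → ℝ) | ∀ j, |x.2.2 j| ≤ M} := by
        have he : {x : ((∀ i, Fin (n i)) → Fin K → ℝ) × (Fin K → ℝ) ×
            ((∀ i, Fin (n i)) → ℝ) | ∀ j, |x.2.2 j| ≤ M} =
            ⋂ j, {x | |x.2.2 j| ≤ M} := by ext x; simp
        rw [he]
        exact isClosed_iInter fun j => isClosed_le
          (continuous_abs.comp ((continuous_apply j).comp (continuous_snd.comp continuous_snd)))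
          continuous_const
      have he : A = _ ∩ (_ ∩ _) := rfl
      have : A = {x : ((∀ i, Fin (n i)) → Fin K → ℝ) × (Fin K → ℝ) ×
          ((∀ i, Fin (n i)) → ℝ) | inSimplex x.1} ∩
          ({x | ∀ k, |x.2.1 k| ≤ M} ∩ {x | ∀ j, |x.2.2 j| ≤ M}) := by
        ext x; simp only [hAdef, Set.mem_setOf_eq, Set.mem_inter_iff]
      rw [this]
      exact h1.inter (h2.inter h3)
    · rintro x ⟨hs, hc, hl⟩
      refine ⟨fun j _ => fun k _ => ⟨(hs j).1 k, ?_⟩,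
        fun k _ => abs_le.mp (hc k), fun j _ => abs_le.mp (hl j)⟩
      calc x.1 j k ≤ ∑ k', x.1 j k' :=
            Finset.single_le_sum (fun k' _ => (hs j).1 k') (Finset.mem_univ k)
        _ = 1 := (hs j).2
  obtain ⟨xm, hxmA, hmin⟩ := hAcomp.exists_isMinOn ⟨⟨u₀, 0, 0⟩, hx₀A⟩
    (continuous_segE n f lam γ).continuousOn
  have hmin' : ∀ x ∈ A, Φ xm ≤ Φ x := fun x hx => isMinOn_iff.mp hmin x hx
  have hlow : ∀ y ∈ S, Φ xm ≤ y := by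
    rintro y ⟨u, c, l, hu, rfl⟩
    by_cases hcase : E₀ ≤ segE n f lam γ u c l
    · exact le_trans (hmin' _ hx₀A) hcase
    · push_neg at hcase
      have hineq : γ * (∑ j, ∑ i, grad n l j i ^ 2) ≤ E₀ := by
        have hfid : 0 ≤ ∑ k, ∑ j, u j k * (f j - l j - c k) ^ 2 :=
          Finset.sum_nonneg fun k _ => Finset.sum_nonneg fun j _ =>
            mul_nonneg ((hu j).1 k) (sq_nonneg _)
        have htv : 0 ≤ ∑ k, lam k * tv n (fun j => u j k) :=
          Finset.sum_nonneg fun k _ => mul_nonneg (hlam k).le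
            (Finset.sum_nonneg fun j _ => Real.sqrt_nonneg _)
        have h := hcase.le
        unfold segE at h
        linarith
      have hgsum : ∑ j, ∑ i, grad n l j i ^ 2 ≤ E₀ / γ := (le_div_iff₀' hγ).mpr hineq
      have hgb : ∀ j i, |grad n l j i| ≤ B := by
        intro j i
        have h1 : grad n l j i ^ 2 ≤ ∑ i', grad n l j i' ^ 2 :=
          Finset.single_le_sum (f := fun i' => grad n l j i' ^ 2)
            (fun i' _ => sq_nonneg _) (Finset.mem_univ i)
        have h2 : ∑ i', grad n l j i' ^ 2 ≤ ∑ j', ∑ i', grad n l j' i' ^ 2 :=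
          Finset.single_le_sum (f := fun j' => ∑ i', grad n l j' i' ^ 2)
            (fun j' _ => Finset.sum_nonneg fun i' _ => sq_nonneg _) (Finset.mem_univ j)
        calc |grad n l j i| = Real.sqrt (grad n l j i ^ 2) := (Real.sqrt_sq_eq_abs _).symm
          _ ≤ B := Real.sqrt_le_sqrt (by linarith)
      set t := l j₀ with htdef
      set l' : (∀ i, Fin (n i)) → ℝ := fun j => l j - t with hl'def
      have hgrad' : ∀ j i, grad n l' j i = grad n l j i := grad_sub_const n l t
      have hl'0 : l' (fun i => ⟨0, hn i⟩) = 0 := sub_self t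
      have hl'b : ∀ j, |l' j| ≤ M₁ := by
        intro j
        have h1 := bound_by_grad n hn l' B hB (fun j' i => (hgrad' j' i) ▸ hgb j' i) hl'0 j
        refine le_trans h1 ?_
        have hcast : ((∑ i, (j i : ℕ) : ℕ) : ℝ) ≤ ∑ i, (n i : ℝ) := by
          push_cast
          exact Finset.sum_le_sum fun i _ => by exact_mod_cast (j i).isLt.le
        exact le_trans (mul_le_mul_of_nonneg_right hcast hB) le_rfl
      set c' : Fin K → ℝ := fun k => max (-M) (min M (c k + t)) with hc'def
      have hc'b : ∀ k, |c' k| ≤ M := by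
        intro k
        rw [abs_le]
        exact ⟨le_max_left _ _, max_le (by linarith) (min_le_left _ _)⟩
      have hmem : (⟨u, c', l'⟩ : ((∀ i, Fin (n i)) → Fin K → ℝ) × (Fin K → ℝ) ×
          ((∀ i, Fin (n i)) → ℝ)) ∈ A :=
        ⟨hu, hc'b, fun j => le_trans (hl'b j) hM₁M⟩
      refine le_trans (hmin' _ hmem) ?_
      show segE n f lam γ u c' l' ≤ segE n f lam γ u c l
      have hterm : ∀ k j, u j k * (f j - l' j - c' k) ^ 2 ≤ u j k * (f j - l j - c k) ^ 2 := by
        intro k j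
        apply mul_le_mul_of_nonneg_left _ ((hu j).1 k)
        have ha : |f j - l' j| ≤ M := by
          calc |f j - l' j| ≤ |f j| + |l' j| := abs_sub _ _
            _ ≤ Mf + M₁ := add_le_add (hMf j) (hl'b j)
        have hcl := clamp_sq (a := f j - l' j) (x := c k + t) ha
        have he : f j - l j - c k = f j - l' j - (c k + t) := by
          simp only [hl'def]; ring
        rw [he]
        exact hcl
      have hfide : ∑ k, ∑ j, u j k * (f j - l' j - c' k) ^ 2
          ≤ ∑ k, ∑ j, u j k * (f j - l j - c k) ^ 2 :=
        Finset.sum_le_sum fun k _ => Finset.sum_le_sum fun j _ => hterm k j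
      have hgr : ∑ j, ∑ i, grad n l' j i ^ 2 = ∑ j, ∑ i, grad n l j i ^ 2 :=
        Finset.sum_congr rfl fun j _ => Finset.sum_congr rfl fun i _ => by rw [hgrad']
      unfold segE
      rw [hgr]
      linarith
  have hSne : S.Nonempty := ⟨segE n f lam γ u₀ 0 0, u₀, 0, 0, hu₀, rfl⟩
  have hbdd : BddBelow S := ⟨0, by
    rintro y ⟨u, c, l, hu, rfl⟩
    exact segE_nonneg n f lam hlam γ hγ u c l hu⟩
  refine ⟨xm.1, xm.2.1, xm.2.2, hxmA.1, ?_⟩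
  apply le_antisymm
  · exact le_csInf hSne hlow
  · exact csInf_le hbdd ⟨xm.1, xm.2.1, xm.2.2, hxmA.1, rfl⟩
end
end

section
/- For the Pham–Prince functional 𝓔(u,C,L) = Σ_{k=1}^K Σ_{j∈G} uₖ(j)² (F(j) − L(j)Cₖ)² + γ₁ Σ_{j∈G} ‖(∇L)(j)‖₂² + γ₂ Σ_{j∈G} ‖(∇²L)(j)‖₂², if F(j) > 0 for all j ∈ G, then the infimum of 𝓔 over all u : G → ℝ^K with u(j) ∈ Δ_K for all j, C ∈ ℝ^K and L : G → ℝ equals 0. (Proof via the sequence L_r := F/r, Cₖ := r, with u arbitrary, as r → ∞.) -/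
open Finset

noncomputable section

/-- Discrete Hessian: the discrete gradient applied to each component of the gradient. -/
def hess {d : ℕ} (n : Fin d → ℕ) (F : (∀ i, Fin (n i)) → ℝ)
    (j : ∀ i, Fin (n i)) (i i' : Fin d) : ℝ :=
  grad n (fun j' => grad n F j' i') j i

/-- The Pham–Prince functional. -/
def phamE {d K : ℕ} (n : Fin d → ℕ) (F : (∀ i, Fin (n i)) → ℝ) (γ₁ γ₂ : ℝ)
    (u : (∀ i, Fin (n i)) → Fin K → ℝ) (C : Fin K → ℝ) (L : (∀ i, Fin (n i)) → ℝ) : ℝ :=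
  (∑ k, ∑ j, u j k ^ 2 * (F j - L j * C k) ^ 2)
    + γ₁ * ∑ j, ∑ i, grad n L j i ^ 2
    + γ₂ * ∑ j, ∑ i, ∑ i', hess n L j i i' ^ 2

/-!
The regularisers of `phamE` only see `L` and are quadratic in it, while the data term vanishes as
soon as `L j * C k = F j`. Taking `C k = r` and `L = F / r` therefore makes the functional equal
to a fixed constant divided by `r ^ 2`, which tends to `0` as `r → ∞`; and the functional is a sum
of nonnegative terms.
-/

open Filter Topology

section Scaling

variable {d : ℕ} (n : Fin d → ℕ) (F : (∀ i, Fin (n i)) → ℝ) (c : ℝ)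

lemma grad_div_const (j : ∀ i, Fin (n i)) (i : Fin d) :
    grad n (fun j' => F j' / c) j i = grad n F j i / c := by
  unfold grad
  split <;> ring

lemma hess_div_const (j : ∀ i, Fin (n i)) (i i' : Fin d) :
    hess n (fun j' => F j' / c) j i i' = hess n F j i i' / c := by
  simp only [hess, grad_div_const]

end Scaling

lemma inSimplex_uniform {G : Type*} [Fintype G] {K : ℕ} (hK : 0 < K) :
    inSimplex (fun (_ : G) (_ : Fin K) => (K : ℝ)⁻¹) := by
  intro j
  refine ⟨fun _ => by positivity, ?_⟩
  simp [Finset.sum_const, nsmul_eq_mul, (Nat.cast_pos.mpr hK).ne']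

lemma phamE_nonneg {d K : ℕ} (n : Fin d → ℕ) (F : (∀ i, Fin (n i)) → ℝ) {γ₁ γ₂ : ℝ}
    (hγ₁ : 0 ≤ γ₁) (hγ₂ : 0 ≤ γ₂) (u : (∀ i, Fin (n i)) → Fin K → ℝ) (C : Fin K → ℝ)
    (L : (∀ i, Fin (n i)) → ℝ) : 0 ≤ phamE n F γ₁ γ₂ u C L := by
  unfold phamE
  have := sum_nonneg fun k (_ : k ∈ univ) =>
    sum_nonneg fun j (_ : j ∈ univ) => mul_nonneg (sq_nonneg (u j k)) (sq_nonneg (F j - L j * C k))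
  positivity

lemma phamE_div_const {d K : ℕ} (n : Fin d → ℕ) (F : (∀ i, Fin (n i)) → ℝ) (γ₁ γ₂ : ℝ)
    (u : (∀ i, Fin (n i)) → Fin K → ℝ) {r : ℝ} (hr : r ≠ 0) :
    phamE n F γ₁ γ₂ u (fun _ => r) (fun j => F j / r) =
      (γ₁ * ∑ j, ∑ i, grad n F j i ^ 2 + γ₂ * ∑ j, ∑ i, ∑ i', hess n F j i i' ^ 2) / r ^ 2 := by
  simp only [phamE, grad_div_const, hess_div_const, div_mul_cancel₀ _ hr, sub_self, div_pow,
    ← sum_div, zero_pow two_ne_zero, mul_zero, sum_const_zero, zero_add]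
  ring

theorem phamE_inf_eq_zero_general (d K : ℕ) (hK : 1 ≤ K)
    (n : Fin d → ℕ)
    (F : (∀ i, Fin (n i)) → ℝ)
    (γ₁ γ₂ : ℝ) (hγ₁ : 0 < γ₁) (hγ₂ : 0 < γ₂) :
    sInf {y : ℝ | ∃ (u : (∀ i, Fin (n i)) → Fin K → ℝ) (C : Fin K → ℝ)
      (L : (∀ i, Fin (n i)) → ℝ), inSimplex u ∧ phamE n F γ₁ γ₂ u C L = y} = 0 := by
  set S := {y : ℝ | ∃ (u : (∀ i, Fin (n i)) → Fin K → ℝ) (C : Fin K → ℝ)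
      (L : (∀ i, Fin (n i)) → ℝ), inSimplex u ∧ phamE n F γ₁ γ₂ u C L = y}
  have hS_nonneg : ∀ y ∈ S, 0 ≤ y := by
    rintro y ⟨u, C, L, -, rfl⟩
    exact phamE_nonneg n F hγ₁.le hγ₂.le u C L
  set M := γ₁ * ∑ j, ∑ i, grad n F j i ^ 2 + γ₂ * ∑ j, ∑ i, ∑ i', hess n F j i i' ^ 2
  have hS_mem : ∀ r : ℝ, r ≠ 0 → M / r ^ 2 ∈ S := fun r hr =>
    ⟨_, _, _, inSimplex_uniform hK, phamE_div_const n F γ₁ γ₂ _ hr⟩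
  have hM_tendsto : Tendsto (fun r : ℝ => M / r ^ 2) atTop (𝓝 0) :=
    tendsto_const_nhds.div_atTop (tendsto_pow_atTop two_ne_zero)
  refine le_antisymm (ge_of_tendsto hM_tendsto ?_) (Real.sInf_nonneg hS_nonneg)
  filter_upwards [eventually_ne_atTop 0] with r hr
  exact csInf_le ⟨0, hS_nonneg⟩ (hS_mem r hr)

theorem phamE_inf_eq_zero (d K : ℕ) (hd : 1 ≤ d) (hK : 1 ≤ K)
    (n : Fin d → ℕ) (hn : ∀ i, 0 < n i)
    (F : (∀ i, Fin (n i)) → ℝ) (hF : ∀ j, 0 < F j)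
    (γ₁ γ₂ : ℝ) (hγ₁ : 0 < γ₁) (hγ₂ : 0 < γ₂) :
    sInf {y : ℝ | ∃ (u : (∀ i, Fin (n i)) → Fin K → ℝ) (C : Fin K → ℝ)
      (L : (∀ i, Fin (n i)) → ℝ), inSimplex u ∧ phamE n F γ₁ γ₂ u C L = y} = 0 :=
  phamE_inf_eq_zero_general d K hK n F γ₁ γ₂ hγ₁ hγ₂
end
end

section
/- The Pham–Prince functional 𝓔(u,C,L) = Σ_{k=1}^K Σ_{j∈G} uₖ(j)² (F(j) − L(j)Cₖ)² + γ₁ Σ_{j∈G} ‖(∇L)(j)‖₂² + γ₂ Σ_{j∈G} ‖(∇²L)(j)‖₂² has no minimizer when F(j) > 0 for all j ∈ G and F attains more than K distinct values: there exist no u : G → ℝ^K with u(j) ∈ Δ_K for all j, C ∈ ℝ^K and L : G → ℝ at which 𝓔 attains its infimum (which equals 0). -/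
open Finset

noncomputable section

lemma grad_smul {d : ℕ} (n : Fin d → ℕ) (F : (∀ i, Fin (n i)) → ℝ) (t : ℝ)
    (j : ∀ i, Fin (n i)) (i : Fin d) :
    grad n (fun j' => t * F j') j i = t * grad n F j i := by
  unfold grad; split <;> ring

lemma hess_smul {d : ℕ} (n : Fin d → ℕ) (F : (∀ i, Fin (n i)) → ℝ) (t : ℝ)
    (j : ∀ i, Fin (n i)) (i i' : Fin d) :
    hess n (fun j' => t * F j') j i i' = t * hess n F j i i' := by
  unfold hess
  have : (fun j' => grad n (fun x => t * F x) j' i') = fun j' => t * grad n F j' i' := by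
    funext j'; exact grad_smul n F t j' i'
  rw [this, grad_smul]

lemma const_of_grad_zero {d : ℕ} (n : Fin d → ℕ) (L : (∀ i, Fin (n i)) → ℝ)
    (h : ∀ j i, grad n L j i = 0) (j j' : ∀ i, Fin (n i)) : L j = L j' := by
  have step : ∀ (i : Fin d) (m : ℕ) (j : ∀ i, Fin (n i)) (hm : (j i : ℕ) + m < n i),
      L j = L (Function.update j i ⟨(j i : ℕ) + m, hm⟩) := by
    intro i m
    induction m with
    | zero =>
      intro j hm
      have : Function.update j i ⟨(j i : ℕ) + 0, hm⟩ = j := by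
        have : (⟨(j i : ℕ) + 0, hm⟩ : Fin (n i)) = j i := by ext; simp
        rw [this, Function.update_eq_self]
      rw [this]
    | succ m ih =>
      intro j hm
      have hm' : (j i : ℕ) + m < n i := by omega
      have h1 := ih j hm'
      set j1 := Function.update j i ⟨(j i : ℕ) + m, hm'⟩ with hj1
      have hj1i : (j1 i : ℕ) = (j i : ℕ) + m := by simp [hj1]
      have h2 := h j1 i
      rw [grad] at h2
      have hlt : (j1 i : ℕ) + 1 < n i := by omega
      rw [dif_pos hlt] at h2
      have h3 : L (Function.update j1 i ⟨(j1 i : ℕ) + 1, hlt⟩) = L j1 := by linarith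
      have h4 : Function.update j1 i ⟨(j1 i : ℕ) + 1, hlt⟩
          = Function.update j i ⟨(j i : ℕ) + (m + 1), hm⟩ := by
        funext x
        by_cases hx : x = i
        · subst hx
          simp only [Function.update_self]
          ext; simp only [Function.update_self]; omega
        · simp [Function.update_of_ne hx, hj1, Function.update_of_ne hx]
      rw [h1, ← h3, h4]
  have hn : ∀ i, 0 < n i := fun i => (j i).pos
  have toTop : ∀ (j : ∀ i, Fin (n i)) (i : Fin d),
      L j = L (Function.update j i ⟨n i - 1, by have := hn i; omega⟩) := by
    intro j i
    have hm : (j i : ℕ) + (n i - 1 - (j i : ℕ)) < n i := by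
      have := (j i).isLt; omega
    have := step i (n i - 1 - (j i : ℕ)) j hm
    have heq : (⟨(j i : ℕ) + (n i - 1 - (j i : ℕ)), hm⟩ : Fin (n i))
        = ⟨n i - 1, by omega⟩ := by
      ext; simp; have := (j i).isLt; omega
    rwa [heq] at this
  set top : ∀ i, Fin (n i) := fun i => ⟨n i - 1, by have := hn i; omega⟩ with htop
  have key : ∀ (j : ∀ i, Fin (n i)), L j = L top := by
    intro j
    have claim : ∀ s : Finset (Fin d),
        L j = L (fun i => if i ∈ s then top i else j i) := by
      intro s
      induction s using Finset.induction with
      | empty => simp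
      | @insert a s ha ih =>
        rw [ih]
        have := toTop (fun i => if i ∈ s then top i else j i) a
        rw [this]
        congr 1
        funext i
        by_cases hia : i = a
        · subst hia; simp [ha, htop]
        · simp [Function.update_of_ne hia, hia]
    have := claim Finset.univ
    simpa using this
  rw [key j, key j']

/-- The Pham–Prince functional has no minimizer when `F > 0` attains more than `K`
distinct values; its infimum (which equals `0`) is not attained. -/
theorem phamE_no_minimizer (d K : ℕ) (hd : 1 ≤ d) (hK : 1 ≤ K)
    (n : Fin d → ℕ) (hn : ∀ i, 0 < n i)
    (F : (∀ i, Fin (n i)) → ℝ) (hF : ∀ j, 0 < F j)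
    (hvals : K < (Set.range F).ncard)
    (γ₁ γ₂ : ℝ) (hγ₁ : 0 < γ₁) (hγ₂ : 0 < γ₂) :
    (¬ ∃ (u : (∀ i, Fin (n i)) → Fin K → ℝ) (C : Fin K → ℝ)
      (L : (∀ i, Fin (n i)) → ℝ), inSimplex u ∧
        phamE n F γ₁ γ₂ u C L
          = sInf {y : ℝ | ∃ (u' : (∀ i, Fin (n i)) → Fin K → ℝ) (C' : Fin K → ℝ)
              (L' : (∀ i, Fin (n i)) → ℝ), inSimplex u' ∧ phamE n F γ₁ γ₂ u' C' L' = y}) ∧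
    sInf {y : ℝ | ∃ (u' : (∀ i, Fin (n i)) → Fin K → ℝ) (C' : Fin K → ℝ)
        (L' : (∀ i, Fin (n i)) → ℝ), inSimplex u' ∧ phamE n F γ₁ γ₂ u' C' L' = y} = 0 := by
  set S := {y : ℝ | ∃ (u' : (∀ i, Fin (n i)) → Fin K → ℝ) (C' : Fin K → ℝ)
      (L' : (∀ i, Fin (n i)) → ℝ), inSimplex u' ∧ phamE n F γ₁ γ₂ u' C' L' = y} with hS
  -- nonnegativity
  have hnonneg : ∀ y ∈ S, (0:ℝ) ≤ y := by
    rintro y ⟨u, C, L, _, rfl⟩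
    unfold phamE
    positivity
  have hbdd : BddBelow S := ⟨0, fun y hy => hnonneg y hy⟩
  -- the canonical simplex element
  set u0 : (∀ i, Fin (n i)) → Fin K → ℝ := fun _ k => if k = ⟨0, hK⟩ then 1 else 0 with hu0
  have hu0s : inSimplex u0 := by
    intro j
    constructor
    · intro k; by_cases h : k = ⟨0, hK⟩ <;> simp [hu0, h]
    · simp [hu0]
  -- values approaching 0
  set M : ℝ := γ₁ * (∑ j, ∑ i, grad n F j i ^ 2) + γ₂ * (∑ j, ∑ i, ∑ i', hess n F j i i' ^ 2)
    with hM
  have hMnn : 0 ≤ M := by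
    apply add_nonneg <;> apply mul_nonneg (le_of_lt (by assumption)) <;> positivity
  have hval : ∀ t : ℝ, t ≠ 0 →
      phamE n F γ₁ γ₂ u0 (fun _ => 1 / t) (fun j => t * F j) = t ^ 2 * M := by
    intro t ht
    unfold phamE
    have h1 : ∀ k : Fin K, ∀ j, u0 j k ^ 2 * (F j - (t * F j) * (1 / t)) ^ 2 = 0 := by
      intro k j
      have : t * F j * (1 / t) = F j := by field_simp
      rw [this]; ring
    have hfirst : (∑ k, ∑ j, u0 j k ^ 2 * (F j - (t * F j) * (1 / t)) ^ 2) = 0 := by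
      apply Finset.sum_eq_zero; intro k _; apply Finset.sum_eq_zero; intro j _; exact h1 k j
    rw [hfirst]
    simp only [grad_smul, hess_smul, mul_pow]
    simp only [← Finset.mul_sum]
    ring
  have hmem : ∀ t : ℝ, t ≠ 0 → t ^ 2 * M ∈ S := by
    intro t ht
    exact ⟨u0, fun _ => 1 / t, fun j => t * F j, hu0s, hval t ht⟩
  have hSne : S.Nonempty := ⟨1 ^ 2 * M, hmem 1 one_ne_zero⟩
  have hinf0 : sInf S = 0 := by
    apply le_antisymm
    · apply le_of_forall_pos_le_add
      intro ε hε
      have htpos : (0:ℝ) < ε / (M + 1) := by positivity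
      set t := Real.sqrt (ε / (M + 1)) with hts
      have ht : t ≠ 0 := ne_of_gt (Real.sqrt_pos.mpr htpos)
      have ht2 : t ^ 2 = ε / (M + 1) := Real.sq_sqrt (le_of_lt htpos)
      have hle : t ^ 2 * M ≤ ε := by
        rw [ht2]
        rw [div_mul_eq_mul_div, div_le_iff₀ (by linarith)]
        nlinarith
      calc sInf S ≤ t ^ 2 * M := csInf_le hbdd (hmem t ht)
        _ ≤ ε := hle
        _ = 0 + ε := by ring
    · exact le_csInf hSne (fun y hy => hnonneg y hy)
  refine ⟨?_, hinf0⟩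
  rintro ⟨u, C, L, hu, hmin⟩
  rw [hinf0] at hmin
  -- each part is zero
  have hA : 0 ≤ (∑ k, ∑ j, u j k ^ 2 * (F j - L j * C k) ^ 2) := by positivity
  have hB : 0 ≤ ∑ j, ∑ i, grad n L j i ^ 2 := by positivity
  have hC : 0 ≤ ∑ j, ∑ i, ∑ i', hess n L j i i' ^ 2 := by positivity
  unfold phamE at hmin
  have hBz : (∑ j, ∑ i, grad n L j i ^ 2) = 0 := by nlinarith
  have hAz : (∑ k, ∑ j, u j k ^ 2 * (F j - L j * C k) ^ 2) = 0 := by nlinarith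
  -- grad L = 0 everywhere
  have hgrad0 : ∀ j i, grad n L j i = 0 := by
    intro j i
    have h1 : ∀ j ∈ (Finset.univ : Finset (∀ i, Fin (n i))),
        (0:ℝ) ≤ ∑ i, grad n L j i ^ 2 := by intro j _; positivity
    have h2 := (Finset.sum_eq_zero_iff_of_nonneg h1).mp hBz j (Finset.mem_univ j)
    have h3 : ∀ i ∈ (Finset.univ : Finset (Fin d)), (0:ℝ) ≤ grad n L j i ^ 2 := by
      intro i _; positivity
    have h4 := (Finset.sum_eq_zero_iff_of_nonneg h3).mp h2 i (Finset.mem_univ i)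
    exact pow_eq_zero_iff (by norm_num) |>.mp h4
  -- L is constant
  have hLconst : ∀ j j', L j = L j' := const_of_grad_zero n L hgrad0
  -- everything in range F is of form L j₀ * C k
  have hterm : ∀ k, ∀ j, u j k ^ 2 * (F j - L j * C k) ^ 2 = 0 := by
    intro k j
    have h1 : ∀ k ∈ (Finset.univ : Finset (Fin K)),
        (0:ℝ) ≤ ∑ j, u j k ^ 2 * (F j - L j * C k) ^ 2 := by intro k _; positivity
    have h2 := (Finset.sum_eq_zero_iff_of_nonneg h1).mp hAz k (Finset.mem_univ k)
    have h3 : ∀ j ∈ (Finset.univ : Finset (∀ i, Fin (n i))),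
        (0:ℝ) ≤ u j k ^ 2 * (F j - L j * C k) ^ 2 := by intro j _; positivity
    exact (Finset.sum_eq_zero_iff_of_nonneg h3).mp h2 j (Finset.mem_univ j)
  have j0 : ∀ i, Fin (n i) := fun i => ⟨0, hn i⟩
  set c := L j0 with hc
  have hFval : ∀ j, ∃ k, F j = c * C k := by
    intro j
    have hsum := (hu j).2
    have : ∃ k, u j k ≠ 0 := by
      by_contra hcon
      push_neg at hcon
      rw [Finset.sum_eq_zero (fun k _ => hcon k)] at hsum
      norm_num at hsum
    obtain ⟨k, hk⟩ := this
    refine ⟨k, ?_⟩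
    have := hterm k j
    have hu2 : u j k ^ 2 ≠ 0 := pow_ne_zero _ hk
    have hz : (F j - L j * C k) ^ 2 = 0 := by
      rcases mul_eq_zero.mp this with h | h
      · exact absurd h hu2
      · exact h
    have := pow_eq_zero_iff (n := 2) (by norm_num) |>.mp hz
    have hLj : L j = c := hLconst j j0
    rw [hLj] at this
    linarith
  -- range F has at most K elements: contradiction
  have hsub : Set.range F ⊆ Set.range (fun k : Fin K => c * C k) := by
    rintro y ⟨j, rfl⟩
    obtain ⟨k, hk⟩ := hFval j
    exact ⟨k, hk.symm⟩
  have hcard : (Set.range F).ncard ≤ K := by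
    calc (Set.range F).ncard ≤ (Set.range (fun k : Fin K => c * C k)).ncard :=
          Set.ncard_le_ncard hsub (Set.finite_range _)
      _ = ((fun k : Fin K => c * C k) '' Set.univ).ncard := by rw [Set.image_univ]
      _ ≤ (Set.univ : Set (Fin K)).ncard := Set.ncard_image_le Set.finite_univ
      _ = K := by rw [Set.ncard_univ]; simp
  omega
end
end

section
/- Let u : G → ℝ^K satisfy uₖ(j) ≥ 0 for all k, j and Σ_{j∈G} uₖ(j) > 0 for every k = 1,…,K (no empty classes), and let γ > 0. Then the function (c,l) ↦ Σ_{k=1}^K Σ_{j∈G} uₖ(j)(f(j) − l(j) − cₖ)² + γ Σ_{j∈G} ‖(∇l)(j)‖₂² is strictly convex on the affine subspace {(c,l) ∈ ℝ^K × ℝ^G : Σ_{j∈G} l(j) = 0}. -/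
open Finset

noncomputable section

lemma grad_comb {d : ℕ} (n : Fin d → ℕ) (a b : ℝ) (F G : (∀ i, Fin (n i)) → ℝ)
    (j : ∀ i, Fin (n i)) (i : Fin d) :
    grad n (a • F + b • G) j i = a * grad n F j i + b * grad n G j i := by
  unfold grad
  split
  · simp only [Pi.add_apply, Pi.smul_apply, smul_eq_mul]; ring
  · ring

lemma grad_sub' {d : ℕ} (n : Fin d → ℕ) (F G : (∀ i, Fin (n i)) → ℝ)
    (j : ∀ i, Fin (n i)) (i : Fin d) :
    grad n (F - G) j i = grad n F j i - grad n G j i := by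
  unfold grad
  split
  · simp only [Pi.sub_apply]; ring
  · ring

lemma const_of_grad_eq_zero {d : ℕ} {n : Fin d → ℕ} {F : (∀ i, Fin (n i)) → ℝ}
    (h : ∀ j i, grad n F j i = 0) (j j' : ∀ i, Fin (n i)) : F j = F j' := by
  have pos : ∀ i, 0 < n i := fun i => (j i).pos
  set top : ∀ i, Fin (n i) := fun i => ⟨n i - 1, Nat.sub_lt (pos i) one_pos⟩ with htop
  have base : ∀ j0 : ∀ i, Fin (n i), (∑ i, (n i - 1 - (j0 i : ℕ))) = 0 → j0 = top := by
    intro j0 h0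
    funext i
    have h1 : n i - 1 - (j0 i : ℕ) = 0 :=
      (Finset.sum_eq_zero_iff.mp h0) i (Finset.mem_univ i)
    have h2 := (j0 i).isLt
    apply Fin.ext
    show (j0 i : ℕ) = n i - 1
    omega
  have H : ∀ m (j0 : ∀ i, Fin (n i)), (∑ i, (n i - 1 - (j0 i : ℕ))) ≤ m → F j0 = F top := by
    intro m
    induction m with
    | zero =>
      intro j0 hj0
      rw [base j0 (Nat.le_zero.mp hj0)]
    | succ m ih =>
      intro j0 hj0
      rcases Nat.eq_zero_or_pos (∑ i, (n i - 1 - (j0 i : ℕ))) with hz | hz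
      · rw [base j0 hz]
      · obtain ⟨i, hi⟩ : ∃ i, 0 < n i - 1 - (j0 i : ℕ) := by
          by_contra hc
          push_neg at hc
          have : ∑ i, (n i - 1 - (j0 i : ℕ)) = 0 :=
            Finset.sum_eq_zero fun i _ => Nat.le_zero.mp (hc i)
          omega
        have hlt : (j0 i : ℕ) + 1 < n i := by have := (j0 i).isLt; omega
        set j1 := Function.update j0 i ⟨(j0 i : ℕ) + 1, hlt⟩ with hj1
        have hFeq : F j0 = F j1 := by
          have hg := h j0 i
          rw [grad, dif_pos hlt] at hg
          exact (sub_eq_zero.mp hg).symm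
        rw [hFeq]
        apply ih
        have hsum : (∑ i', (n i' - 1 - (j1 i' : ℕ))) < ∑ i', (n i' - 1 - (j0 i' : ℕ)) := by
          apply Finset.sum_lt_sum
          · intro i' _
            rcases eq_or_ne i' i with rfl | hne
            · simp only [hj1, Function.update_self]
              omega
            · simp only [hj1, Function.update_of_ne hne]
              exact le_rfl
          · exact ⟨i, Finset.mem_univ i, by simp only [hj1, Function.update_self]; omega⟩
        omega
  rw [H _ j le_rfl, H _ j' le_rfl]

/-- For fixed nonnegative `u` with no empty classes and `γ > 0`, the map
`(c,l) ↦ Σ_k Σ_j u_k(j)(f(j) − l(j) − c_k)² + γ ‖∇l‖₂²` is strictly convex on the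
affine subspace of pairs `(c,l)` with `Σ_j l(j) = 0`. -/
theorem strictConvexOn_in_c_l (d K : ℕ) (n : Fin d → ℕ)
    (f : (∀ i, Fin (n i)) → ℝ) (γ : ℝ) (hγ : 0 < γ)
    (u : (∀ i, Fin (n i)) → Fin K → ℝ) (hu : ∀ j k, 0 ≤ u j k)
    (hne : ∀ k, 0 < ∑ j, u j k) :
    StrictConvexOn ℝ
      {p : (Fin K → ℝ) × ((∀ i, Fin (n i)) → ℝ) | ∑ j, p.2 j = 0}
      (fun p : (Fin K → ℝ) × ((∀ i, Fin (n i)) → ℝ) =>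
        (∑ k, ∑ j, u j k * (f j - p.2 j - p.1 k) ^ 2)
          + γ * ∑ j, ∑ i, grad n p.2 j i ^ 2) := by
  constructor
  · -- convexity of the set
    intro x hx y hy a b ha hb hab
    simp only [Set.mem_setOf_eq] at hx hy ⊢
    simp only [Prod.snd_add, Prod.smul_snd, Pi.add_apply, Pi.smul_apply, smul_eq_mul]
    rw [Finset.sum_add_distrib, ← Finset.mul_sum, ← Finset.mul_sum, hx, hy]
    ring
  · intro x hx y hy hxy a b ha hb hab
    simp only [Set.mem_setOf_eq] at hx hy
    have hb' : b = 1 - a := by linarith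
    have hsnd : (a • x + b • y).2 = a • x.2 + b • y.2 := rfl
    have hfst : (a • x + b • y).1 = a • x.1 + b • y.1 := rfl
    have e1 : ∑ k, ∑ j, u j k * (f j - (a • x + b • y).2 j - (a • x + b • y).1 k) ^ 2
        = ∑ k, ∑ j, (a * (u j k * (f j - x.2 j - x.1 k) ^ 2)
            + b * (u j k * (f j - y.2 j - y.1 k) ^ 2)
            - a * b * (u j k * ((x.2 j - y.2 j) + (x.1 k - y.1 k)) ^ 2)) := by
      refine Finset.sum_congr rfl fun k _ => Finset.sum_congr rfl fun j _ => ?_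
      rw [hsnd, hfst]
      simp only [Pi.add_apply, Pi.smul_apply, smul_eq_mul]
      rw [hb']
      ring
    have e2 : ∑ j, ∑ i, grad n (a • x + b • y).2 j i ^ 2
        = ∑ j, ∑ i, (a * grad n x.2 j i ^ 2 + b * grad n y.2 j i ^ 2
            - a * b * (grad n x.2 j i - grad n y.2 j i) ^ 2) := by
      refine Finset.sum_congr rfl fun j _ => Finset.sum_congr rfl fun i _ => ?_
      rw [hsnd, grad_comb, hb']
      ring
    have key : (∑ k, ∑ j, u j k * (f j - (a • x + b • y).2 j - (a • x + b • y).1 k) ^ 2)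
          + γ * ∑ j, ∑ i, grad n (a • x + b • y).2 j i ^ 2
        = a * ((∑ k, ∑ j, u j k * (f j - x.2 j - x.1 k) ^ 2)
              + γ * ∑ j, ∑ i, grad n x.2 j i ^ 2)
          + b * ((∑ k, ∑ j, u j k * (f j - y.2 j - y.1 k) ^ 2)
              + γ * ∑ j, ∑ i, grad n y.2 j i ^ 2)
          - a * b * ((∑ k, ∑ j, u j k * ((x.2 j - y.2 j) + (x.1 k - y.1 k)) ^ 2)
              + γ * ∑ j, ∑ i, (grad n x.2 j i - grad n y.2 j i) ^ 2) := by
      rw [e1, e2]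
      simp only [Finset.sum_add_distrib, Finset.sum_sub_distrib, ← Finset.mul_sum]
      ring
    -- positivity of the quadratic form at x - y
    have hQ1nonneg : (0:ℝ) ≤ ∑ k, ∑ j, u j k * ((x.2 j - y.2 j) + (x.1 k - y.1 k)) ^ 2 :=
      Finset.sum_nonneg fun k _ => Finset.sum_nonneg fun j _ =>
        mul_nonneg (hu j k) (sq_nonneg _)
    have hQ2nonneg : (0:ℝ) ≤ ∑ j, ∑ i, (grad n x.2 j i - grad n y.2 j i) ^ 2 :=
      Finset.sum_nonneg fun j _ => Finset.sum_nonneg fun i _ => sq_nonneg _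
    have qpos : 0 < (∑ k, ∑ j, u j k * ((x.2 j - y.2 j) + (x.1 k - y.1 k)) ^ 2)
        + γ * ∑ j, ∑ i, (grad n x.2 j i - grad n y.2 j i) ^ 2 := by
      rcases hQ1nonneg.lt_or_eq with h1 | h1
      · positivity
      rcases hQ2nonneg.lt_or_eq with h2 | h2
      · have : 0 < γ * ∑ j, ∑ i, (grad n x.2 j i - grad n y.2 j i) ^ 2 := mul_pos hγ h2
        linarith
      -- both are zero; derive a contradiction with x ≠ y
      exfalso
      have hQ2zero : ∀ j, ∀ i, (grad n x.2 j i - grad n y.2 j i) ^ 2 = 0 := by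
        intro j i
        have hall := (Finset.sum_eq_zero_iff_of_nonneg fun j _ =>
          Finset.sum_nonneg fun i _ => sq_nonneg
            (grad n x.2 j i - grad n y.2 j i)).mp h2.symm j (Finset.mem_univ j)
        exact (Finset.sum_eq_zero_iff_of_nonneg fun i _ => sq_nonneg _).mp hall i
          (Finset.mem_univ i)
      have hgradzero : ∀ j i, grad n (x.2 - y.2) j i = 0 := by
        intro j i
        rw [grad_sub']
        exact sub_eq_zero.mpr (sub_eq_zero.mp (pow_eq_zero_iff two_ne_zero |>.mp (hQ2zero j i)) |>.symm ▸ rfl)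
      have hQ1zero : ∀ k, ∀ j, u j k * ((x.2 j - y.2 j) + (x.1 k - y.1 k)) ^ 2 = 0 := by
        intro k j
        have hall := (Finset.sum_eq_zero_iff_of_nonneg fun k _ =>
          Finset.sum_nonneg fun j _ => mul_nonneg (hu j k) (sq_nonneg _)).mp h1.symm k
            (Finset.mem_univ k)
        exact (Finset.sum_eq_zero_iff_of_nonneg fun j _ =>
          mul_nonneg (hu j k) (sq_nonneg _)).mp hall j (Finset.mem_univ j)
      rcases isEmpty_or_nonempty (∀ i, Fin (n i)) with hE | hNE
      · have h2eq : x.2 = y.2 := Subsingleton.elim _ _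
        have h1ne : x.1 ≠ y.1 := fun hc => hxy (Prod.ext hc h2eq)
        obtain ⟨k, _⟩ := Function.ne_iff.mp h1ne
        have := hne k
        simp [Finset.univ_eq_empty] at this
      · have hconst := const_of_grad_eq_zero hgradzero
        obtain ⟨j0⟩ := hNE
        have h2eq : x.2 = y.2 := by
          funext j
          have hsum0 : ∑ j', (x.2 j' - y.2 j') = 0 := by
            rw [Finset.sum_sub_distrib, hx, hy, sub_zero]
          have hconst' : ∑ j', (x.2 j' - y.2 j') =
              ((Finset.univ (α := ∀ i, Fin (n i))).card : ℝ) * (x.2 j - y.2 j) := by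
            rw [Finset.sum_congr rfl fun j' _ => (by
              have := hconst j' j
              simpa [Pi.sub_apply] using this : x.2 j' - y.2 j' = x.2 j - y.2 j)]
            rw [Finset.sum_const, nsmul_eq_mul]
          have hcard : (0:ℝ) < (Finset.univ (α := ∀ i, Fin (n i))).card := by
            have : 0 < (Finset.univ (α := ∀ i, Fin (n i))).card :=
              Finset.card_pos.mpr ⟨j0, Finset.mem_univ j0⟩
            exact_mod_cast this
          have : x.2 j - y.2 j = 0 := by
            rw [hconst'] at hsum0
            exact (mul_eq_zero.mp hsum0).resolve_left (ne_of_gt hcard)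
          linarith
        have h1ne : x.1 ≠ y.1 := fun hc => hxy (Prod.ext hc h2eq)
        obtain ⟨k, hk⟩ := Function.ne_iff.mp h1ne
        have hsq : (0:ℝ) < (x.1 k - y.1 k) ^ 2 := by
          have : x.1 k - y.1 k ≠ 0 := sub_ne_zero.mpr hk
          positivity
        have huzero : ∀ j, u j k = 0 := by
          intro j
          have := hQ1zero k j
          rw [h2eq] at this
          simp only [sub_self, zero_add] at this
          rcases mul_eq_zero.mp this with h | h
          · exact h
          · exact absurd h (ne_of_gt hsq)
        have := hne k
        rw [Finset.sum_eq_zero fun j _ => huzero j] at this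
        exact lt_irrefl 0 this
    have habpos : 0 < a * b := mul_pos ha hb
    calc (fun p : (Fin K → ℝ) × ((∀ i, Fin (n i)) → ℝ) =>
        (∑ k, ∑ j, u j k * (f j - p.2 j - p.1 k) ^ 2)
          + γ * ∑ j, ∑ i, grad n p.2 j i ^ 2) (a • x + b • y)
        = (∑ k, ∑ j, u j k * (f j - (a • x + b • y).2 j - (a • x + b • y).1 k) ^ 2)
          + γ * ∑ j, ∑ i, grad n (a • x + b • y).2 j i ^ 2 := rfl
      _ < _ := by
          rw [key]
          have := mul_pos habpos qpos
          simp only [smul_eq_mul]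
          linarith
end
end

section
/- Let d ≥ 1 and n₁,…,n_d ≥ 1, and for i = 1,…,d set aᵢ = ∏_{j<i} n_j, bᵢ = ∏_{j>i} n_j and Dᵢ = I_{bᵢ} ⊗ D_{nᵢ} ⊗ I_{aᵢ}, where ⊗ is the Kronecker product of matrices and I_m the m×m identity. Then the spectral norm of the d-dimensional discrete Laplacian ∇*∇ = Σ_{i=1}^d Dᵢᵀ Dᵢ, an n×n matrix with n = n₁⋯n_d, is strictly smaller than 4d. -/
/-!
By the triangle inequality and the C*-identity `‖AᵀA‖ = ‖A‖²` for the spectral norm,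
`‖∑ DᵢᵀDᵢ‖ ≤ ∑ ‖Dᵢ‖²`. Reindexing and tensoring with identity matrices do not increase the
spectral norm, so `‖Dᵢ‖ ≤ ‖D_{nᵢ}‖`, and it remains to see `‖D_m‖ < 2`. For a vector `v`,
`∑ (v_{j+1} - v_j)² + ∑ (v_{j+1} + v_j)² + 2 v₀² + 2 v_{m-1}² = 4 ∑ v_j²`, and the last three
terms vanish only if `v₀ = 0` and `v_{j+1} = -v_j` for all `j`, i.e. `v = 0`. Hence `‖D_m v‖ < 2 ‖v‖`
for `v ≠ 0`, and since the norm is attained on the compact unit sphere, `‖D_m‖ < 2`.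
-/

open Finset Matrix Kronecker

noncomputable section

/-- One-dimensional forward-difference matrix with mirror boundary conditions:
`(D_m)_{j,j} = −1`, `(D_m)_{j,j+1} = 1` for `j = 1,…,m−1`, last row zero. -/
def Dmat (m : ℕ) : Matrix (Fin m) (Fin m) ℝ :=
  Matrix.of fun i j =>
    if (i : ℕ) + 1 < m then
      (if j = i then (-1 : ℝ) else if (j : ℕ) = (i : ℕ) + 1 then 1 else 0)
    else 0

open scoped Matrix.Norms.L2Operator

theorem ContinuousLinearMap.opNorm_lt_of_forall_norm_apply_lt {E F : Type*}
    [NormedAddCommGroup E] [NormedSpace ℝ E] [FiniteDimensional ℝ E]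
    [NormedAddCommGroup F] [NormedSpace ℝ F] (f : E →L[ℝ] F) {c : ℝ} (hc : 0 < c)
    (h : ∀ x, ‖x‖ = 1 → ‖f x‖ < c) : ‖f‖ < c := by
  have := FiniteDimensional.proper_rclike ℝ E
  rw [← f.sSup_sphere_eq_norm]
  rcases ((Metric.sphere (0 : E) 1).image fun x => ‖f x‖).eq_empty_or_nonempty with hS | hS
  · rwa [hS, Real.sSup_empty]
  · obtain ⟨x, hx, hfx⟩ := ((isCompact_sphere 0 1).image (by fun_prop)).sSup_mem hS
    exact hfx ▸ h x (mem_sphere_zero_iff_norm.mp hx)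

theorem EuclideanSpace.norm_toLp_sq {n : Type*} [Fintype n] (v : n → ℝ) :
    ‖(WithLp.toLp 2 v : EuclideanSpace ℝ n)‖ ^ 2 = v ⬝ᵥ v := by
  rw [← real_inner_self_eq_norm_sq, EuclideanSpace.inner_toLp_toLp, star_trivial]

namespace Matrix

theorem one_kronecker_mulVec {α l m n : Type*} [NonAssocSemiring α] [Fintype l] [DecidableEq l]
    [Fintype n] (A : Matrix m n α) (v : l × n → α) :
    ((1 : Matrix l l α) ⊗ₖ A) *ᵥ v = fun p => (A *ᵥ fun j => v (p.1, j)) p.2 := by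
  ext ⟨i, k⟩
  simp [mulVec, dotProduct, Fintype.sum_prod_type, one_apply, ite_mul]

theorem kronecker_one_mulVec {α l m n : Type*} [NonAssocSemiring α] [Fintype l] [DecidableEq l]
    [Fintype n] (A : Matrix m n α) (v : n × l → α) :
    (A ⊗ₖ (1 : Matrix l l α)) *ᵥ v = fun p => (A *ᵥ fun j => v (j, p.2)) p.1 := by
  ext ⟨k, i⟩
  simp [mulVec, dotProduct, Fintype.sum_prod_type, one_apply, mul_ite]

section L2OpNorm

variable {m n : Type*} [Fintype m] [Fintype n] [DecidableEq n]

theorem l2_opNorm_le_iff (A : Matrix m n ℝ) {c : ℝ} (hc : 0 ≤ c) :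
    ‖A‖ ≤ c ↔ ∀ v, (A *ᵥ v) ⬝ᵥ (A *ᵥ v) ≤ c ^ 2 * (v ⬝ᵥ v) := by
  rw [l2_opNorm_def, ContinuousLinearMap.opNorm_le_iff hc, (WithLp.equiv 2 _).forall_congr_left]
  refine forall_congr' fun v => ?_
  rw [← pow_le_pow_iff_left₀ (norm_nonneg _) (by positivity) two_ne_zero, mul_pow]
  simp only [LinearEquiv.trans_apply, WithLp.equiv_symm_apply,
    LinearMap.coe_toContinuousLinearMap', toLpLin_toLp, toLin'_apply,
    EuclideanSpace.norm_toLp_sq]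

theorem dotProduct_mulVec_self_le (A : Matrix m n ℝ) (v : n → ℝ) :
    (A *ᵥ v) ⬝ᵥ (A *ᵥ v) ≤ ‖A‖ ^ 2 * (v ⬝ᵥ v) :=
  (l2_opNorm_le_iff A (norm_nonneg A)).1 le_rfl v

theorem l2_opNorm_lt_of_forall_dotProduct_lt (A : Matrix m n ℝ) {c : ℝ} (hc : 0 < c)
    (h : ∀ v ≠ 0, (A *ᵥ v) ⬝ᵥ (A *ᵥ v) < c ^ 2 * (v ⬝ᵥ v)) : ‖A‖ < c := by
  rw [l2_opNorm_def]
  refine ContinuousLinearMap.opNorm_lt_of_forall_norm_apply_lt _ hc fun x hx => ?_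
  obtain ⟨v, rfl⟩ := (WithLp.equiv 2 (n → ℝ)).symm.surjective x
  have hv : v ≠ 0 := by rintro rfl; simp at hx
  have hv1 : v ⬝ᵥ v = 1 := by
    rw [← EuclideanSpace.norm_toLp_sq, ← WithLp.equiv_symm_apply, hx, one_pow]
  rw [← pow_lt_pow_iff_left₀ (norm_nonneg _) hc.le two_ne_zero]
  simp only [LinearEquiv.trans_apply, WithLp.equiv_symm_apply,
    LinearMap.coe_toContinuousLinearMap', toLpLin_toLp, toLin'_apply,
    EuclideanSpace.norm_toLp_sq]
  simpa [hv1] using h v hv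

theorem l2_opNorm_reindex_le {m' n' : Type*} [Fintype m'] [Fintype n'] [DecidableEq n']
    (eₘ : m ≃ m') (eₙ : n ≃ n') (A : Matrix m n ℝ) : ‖reindex eₘ eₙ A‖ ≤ ‖A‖ := by
  rw [l2_opNorm_le_iff _ (norm_nonneg A)]
  intro v
  simp only [reindex_apply, submatrix_mulVec_equiv, comp_equiv_dotProduct_comp_equiv]
  simpa using dotProduct_mulVec_self_le A (v ∘ eₙ)

theorem l2_opNorm_reindex {m' n' : Type*} [Fintype m'] [Fintype n'] [DecidableEq n']
    (eₘ : m ≃ m') (eₙ : n ≃ n') (A : Matrix m n ℝ) : ‖reindex eₘ eₙ A‖ = ‖A‖ :=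
  (l2_opNorm_reindex_le eₘ eₙ A).antisymm <| by
    simpa using l2_opNorm_reindex_le eₘ.symm eₙ.symm (reindex eₘ eₙ A)

variable {l : Type*} [Fintype l] [DecidableEq l]

theorem l2_opNorm_one_kronecker_le (A : Matrix m n ℝ) :
    ‖(1 : Matrix l l ℝ) ⊗ₖ A‖ ≤ ‖A‖ := by
  rw [l2_opNorm_le_iff _ (norm_nonneg A)]
  intro v
  rw [one_kronecker_mulVec]
  calc _ = ∑ i, (A *ᵥ fun j => v (i, j)) ⬝ᵥ (A *ᵥ fun j => v (i, j)) :=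
        Fintype.sum_prod_type _
    _ ≤ ∑ i : l, ‖A‖ ^ 2 * ((fun j => v (i, j)) ⬝ᵥ fun j => v (i, j)) :=
        Finset.sum_le_sum fun i _ => dotProduct_mulVec_self_le A _
    _ = ‖A‖ ^ 2 * (v ⬝ᵥ v) := by
        rw [← Finset.mul_sum]
        exact congrArg _ (Fintype.sum_prod_type fun p => v p * v p).symm

theorem l2_opNorm_kronecker_one_le (A : Matrix m n ℝ) :
    ‖A ⊗ₖ (1 : Matrix l l ℝ)‖ ≤ ‖A‖ := by
  rw [l2_opNorm_le_iff _ (norm_nonneg A)]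
  intro v
  rw [kronecker_one_mulVec]
  calc _ = ∑ i, (A *ᵥ fun j => v (j, i)) ⬝ᵥ (A *ᵥ fun j => v (j, i)) :=
        Fintype.sum_prod_type_right _
    _ ≤ ∑ i : l, ‖A‖ ^ 2 * ((fun j => v (j, i)) ⬝ᵥ fun j => v (j, i)) :=
        Finset.sum_le_sum fun i _ => dotProduct_mulVec_self_le A _
    _ = ‖A‖ ^ 2 * (v ⬝ᵥ v) := by
        rw [← Finset.mul_sum]
        exact congrArg _ (Fintype.sum_prod_type_right fun p => v p * v p).symm

end L2OpNorm

end Matrix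

theorem Fin.sum_sq_succ_sub_castSucc_lt {k : ℕ} (v : Fin (k + 1) → ℝ) (hv : v ≠ 0) :
    ∑ i : Fin k, (v i.succ - v i.castSucc) ^ 2 < 4 * (v ⬝ᵥ v) := by
  have hsucc : v ⬝ᵥ v = v 0 ^ 2 + ∑ i : Fin k, v i.succ ^ 2 := by
    simp [dotProduct, Fin.sum_univ_succ, sq]
  have hcast : v ⬝ᵥ v = ∑ i : Fin k, v i.castSucc ^ 2 + v (Fin.last k) ^ 2 := by
    simp [dotProduct, Fin.sum_univ_castSucc, sq]
  have hparallelogram :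
      ∑ i : Fin k, ((v i.succ - v i.castSucc) ^ 2 + (v i.succ + v i.castSucc) ^ 2)
        = ∑ i : Fin k, (2 * v i.succ ^ 2 + 2 * v i.castSucc ^ 2) :=
    Finset.sum_congr rfl fun i _ => by ring
  rw [Finset.sum_add_distrib, Finset.sum_add_distrib, ← Finset.mul_sum, ← Finset.mul_sum]
    at hparallelogram
  by_contra! hle
  have hsum_nonneg := Finset.sum_nonneg (s := Finset.univ) fun (i : Fin k) _ =>
    sq_nonneg (v i.succ + v i.castSucc)
  have hsum_zero : ∑ i : Fin k, (v i.succ + v i.castSucc) ^ 2 = 0 := by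
    nlinarith [sq_nonneg (v 0), sq_nonneg (v (Fin.last k))]
  have hzero : v 0 = 0 := by
    nlinarith [sq_nonneg (v 0), sq_nonneg (v (Fin.last k))]
  have hanti : ∀ i : Fin k, v i.succ = -v i.castSucc := fun i => by
    have := (Finset.sum_eq_zero_iff_of_nonneg fun i _ => sq_nonneg _).1 hsum_zero i
      (Finset.mem_univ i)
    linarith [(pow_eq_zero_iff two_ne_zero).1 this]
  have hvanish : ∀ i, v i = 0 := Fin.induction hzero fun i hi => by rw [hanti, hi, neg_zero]
  exact hv (funext hvanish)

theorem Dmat_mulVec_apply {m : ℕ} (v : Fin m → ℝ) (i : Fin m) :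
    (Dmat m *ᵥ v) i = if h : (i : ℕ) + 1 < m then v ⟨i + 1, h⟩ - v i else 0 := by
  by_cases h : (i : ℕ) + 1 < m
  · have hne : (⟨i + 1, h⟩ : Fin m) ≠ i := by simp [Fin.ext_iff]
    simp only [mulVec, dotProduct, Dmat, of_apply, h, if_true, dif_pos, ite_mul, neg_one_mul,
      one_mul, zero_mul]
    rw [Fintype.sum_eq_add _ _ hne, if_neg hne, if_pos rfl, if_pos rfl, sub_eq_add_neg]
    rintro j ⟨hj, hji⟩
    rw [if_neg hji, if_neg (fun hj' => hj (Fin.ext hj'))]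
  · simp [mulVec, dotProduct, Dmat, h]

theorem dotProduct_Dmat_mulVec_self (k : ℕ) (v : Fin (k + 1) → ℝ) :
    (Dmat (k + 1) *ᵥ v) ⬝ᵥ (Dmat (k + 1) *ᵥ v) = ∑ i : Fin k, (v i.succ - v i.castSucc) ^ 2 := by
  simp [dotProduct, Fin.sum_univ_castSucc, Dmat_mulVec_apply, sq, Fin.succ]

theorem l2_opNorm_Dmat_lt (m : ℕ) : ‖Dmat m‖ < 2 := by
  refine l2_opNorm_lt_of_forall_dotProduct_lt _ two_pos fun v hv => ?_
  cases m with
  | zero => exact absurd (Subsingleton.elim v 0) hv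
  | succ k =>
    rw [dotProduct_Dmat_mulVec_self]
    linarith [Fin.sum_sq_succ_sub_castSucc_lt v hv]

theorem opNorm_laplacian_lt_general (d : ℕ) (hd : 1 ≤ d) (n : Fin d → ℕ)
    (N : ℕ)
    (a b : Fin d → ℕ)
    (hprod : ∀ i, b i * n i * a i = N)
    (D : Fin d → Matrix (Fin N) (Fin N) ℝ)
    (hD : ∀ i, D i = Matrix.reindex
      (((finProdFinEquiv.prodCongr (Equiv.refl (Fin (a i)))).trans finProdFinEquiv).trans
        (finCongr (hprod i)))
      (((finProdFinEquiv.prodCongr (Equiv.refl (Fin (a i)))).trans finProdFinEquiv).trans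
        (finCongr (hprod i)))
      (((1 : Matrix (Fin (b i)) (Fin (b i)) ℝ) ⊗ₖ Dmat (n i)) ⊗ₖ
        (1 : Matrix (Fin (a i)) (Fin (a i)) ℝ))) :
    ‖Matrix.toEuclideanCLM (𝕜 := ℝ) (∑ i, (D i)ᵀ * D i)‖ < 4 * d := by
  have hDi : ∀ i, ‖D i‖ < 2 := fun i => by
    rw [hD i, l2_opNorm_reindex]
    exact (l2_opNorm_kronecker_one_le _).trans (l2_opNorm_one_kronecker_le _)
      |>.trans_lt (l2_opNorm_Dmat_lt (n i))
  calc ‖Matrix.toEuclideanCLM (𝕜 := ℝ) (∑ i, (D i)ᵀ * D i)‖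
      = ‖∑ i, (D i)ᵀ * D i‖ := l2_opNorm_toEuclideanCLM _
    _ ≤ ∑ i, ‖(D i)ᵀ * D i‖ := norm_sum_le _ _
    _ = ∑ i, ‖D i‖ * ‖D i‖ := by
        simp only [← conjTranspose_eq_transpose_of_trivial, l2_opNorm_conjTranspose_mul_self]
    _ < ∑ _i : Fin d, 4 := by
        refine Finset.sum_lt_sum_of_nonempty ⟨⟨0, hd⟩, Finset.mem_univ _⟩ fun i _ => ?_
        nlinarith [hDi i, norm_nonneg (D i)]
    _ = 4 * d := by simp [mul_comm]

/-- The spectral norm of the `d`-dimensional discrete Laplacian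
`∇*∇ = Σ_{i=1}^d Dᵢᵀ Dᵢ`, with `Dᵢ = I_{bᵢ} ⊗ D_{nᵢ} ⊗ I_{aᵢ}` (Kronecker products,
viewed as `N×N` matrices with `N = n₁⋯n_d`), is strictly smaller than `4d`. -/
theorem opNorm_laplacian_lt (d : ℕ) (hd : 1 ≤ d) (n : Fin d → ℕ) (hn : ∀ i, 1 ≤ n i)
    (N : ℕ) (hN : N = ∏ j, n j)
    (a b : Fin d → ℕ)
    (ha : ∀ i, a i = ∏ j ∈ Finset.univ.filter (fun j => j < i), n j)
    (hb : ∀ i, b i = ∏ j ∈ Finset.univ.filter (fun j => i < j), n j)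
    (hprod : ∀ i, b i * n i * a i = N)
    (D : Fin d → Matrix (Fin N) (Fin N) ℝ)
    (hD : ∀ i, D i = Matrix.reindex
      (((finProdFinEquiv.prodCongr (Equiv.refl (Fin (a i)))).trans finProdFinEquiv).trans
        (finCongr (hprod i)))
      (((finProdFinEquiv.prodCongr (Equiv.refl (Fin (a i)))).trans finProdFinEquiv).trans
        (finCongr (hprod i)))
      (((1 : Matrix (Fin (b i)) (Fin (b i)) ℝ) ⊗ₖ Dmat (n i)) ⊗ₖ
        (1 : Matrix (Fin (a i)) (Fin (a i)) ℝ))) :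
    ‖Matrix.toEuclideanCLM (𝕜 := ℝ) (∑ i, (D i)ᵀ * D i)‖ < 4 * d :=
  opNorm_laplacian_lt_general d hd n N a b hprod D hD
end
end

section
/- The partial gradient of H with respect to the codebook c, namely ∇_c H(u,c,l) = ( 2 Σ_{j∈G} uₖ(j)(cₖ + l(j) − f(j)) )_{k=1}^K, is globally Lipschitz in c with constant 2n on the simplex-constrained label assignments: for every u : G → ℝ^K with u(j) ∈ Δ_K for all j, every l : G → ℝ and all c¹, c² ∈ ℝ^K, ‖∇_c H(u,c¹,l) − ∇_c H(u,c²,l)‖₂ ≤ 2n ‖c¹ − c²‖₂, where n = n₁⋯n_d is the number of grid points. -/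
open Finset

noncomputable section

/-- The partial gradient `∇_c H(u,c,l) = (2 Σ_j u_k(j)(c_k + l(j) − f(j)))_k` is globally
Lipschitz in `c` with constant `2n` for simplex-valued `u`, where `n = n₁⋯n_d` is the
number of grid points. -/
theorem gradc_lipschitz (d K : ℕ) (n : Fin d → ℕ)
    (f : (∀ i, Fin (n i)) → ℝ)
    (u : (∀ i, Fin (n i)) → Fin K → ℝ)
    (hu : ∀ j, (∀ k, 0 ≤ u j k) ∧ ∑ k, u j k = 1)
    (l : (∀ i, Fin (n i)) → ℝ) (c₁ c₂ : Fin K → ℝ) :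
    Real.sqrt (∑ k, ((2 * ∑ j, u j k * (c₁ k + l j - f j))
        - (2 * ∑ j, u j k * (c₂ k + l j - f j))) ^ 2)
      ≤ 2 * (∏ i, n i : ℕ) * Real.sqrt (∑ k, (c₁ k - c₂ k) ^ 2) := by
  set N : ℝ := ((∏ i, n i : ℕ) : ℝ) with hN
  have hNcard : N = (Fintype.card (∀ i, Fin (n i)) : ℝ) := by
    simp [hN, Fintype.card_pi]
  have hNnn : (0:ℝ) ≤ N := by positivity
  -- rewrite the difference
  have key : ∀ k, (2 * ∑ j, u j k * (c₁ k + l j - f j))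
      - (2 * ∑ j, u j k * (c₂ k + l j - f j))
      = 2 * (∑ j, u j k) * (c₁ k - c₂ k) := by
    intro k
    rw [← mul_sub, ← Finset.sum_sub_distrib, mul_assoc, Finset.sum_mul]
    congr 1
    apply Finset.sum_congr rfl
    intro j _
    ring
  have hs : ∀ k, 0 ≤ (∑ j, u j k) ∧ (∑ j, u j k) ≤ N := by
    intro k
    constructor
    · exact Finset.sum_nonneg fun j _ => (hu j).1 k
    · have hle : ∀ j : (∀ i, Fin (n i)), u j k ≤ 1 := by
        intro j
        calc u j k ≤ ∑ k', u j k' :=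
              Finset.single_le_sum (fun k' _ => (hu j).1 k') (Finset.mem_univ k)
          _ = 1 := (hu j).2
      calc (∑ j, u j k) ≤ ∑ _j : (∀ i, Fin (n i)), (1:ℝ) :=
            Finset.sum_le_sum fun j _ => hle j
        _ = N := by rw [hNcard]; simp
  have hsum : (∑ k, ((2 * ∑ j, u j k * (c₁ k + l j - f j))
      - (2 * ∑ j, u j k * (c₂ k + l j - f j))) ^ 2)
      ≤ (2 * N) ^ 2 * ∑ k, (c₁ k - c₂ k) ^ 2 := by
    rw [Finset.mul_sum]
    apply Finset.sum_le_sum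
    intro k _
    rw [key k]
    have h1 := (hs k).1
    have h2 := (hs k).2
    have : (2 * (∑ j, u j k) * (c₁ k - c₂ k)) ^ 2
        = (2 * (∑ j, u j k)) ^ 2 * (c₁ k - c₂ k) ^ 2 := by ring
    rw [this]
    apply mul_le_mul_of_nonneg_right _ (sq_nonneg _)
    apply pow_le_pow_left₀ (by linarith) (by linarith)
  calc Real.sqrt (∑ k, ((2 * ∑ j, u j k * (c₁ k + l j - f j))
        - (2 * ∑ j, u j k * (c₂ k + l j - f j))) ^ 2)
      ≤ Real.sqrt ((2 * N) ^ 2 * ∑ k, (c₁ k - c₂ k) ^ 2) := Real.sqrt_le_sqrt hsum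
    _ = 2 * N * Real.sqrt (∑ k, (c₁ k - c₂ k) ^ 2) := by
        rw [Real.sqrt_mul (sq_nonneg _), Real.sqrt_sq (by linarith)]
end
end

section
/- The non-logarithmic data term is triconvex: for p ≥ 1, F : G → ℝ, the function 𝓔_data(u,C,L) = Σ_{k=1}^K Σ_{j∈G} uₖ(j)^p (F(j) − L(j)Cₖ)² is (i) convex in u on {u : G → ℝ^K : uₖ(j) ≥ 0 for all k,j} for fixed C ∈ ℝ^K and L : G → ℝ; (ii) convex in C on ℝ^K for fixed u with uₖ(j) ≥ 0 and fixed L; and (iii) convex in L on ℝ^G for fixed u with uₖ(j) ≥ 0 and fixed C. -/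
/-!
Each summand `u j k ^ p * (F j - L j * C k) ^ 2` depends on the variable block only through
one coordinate: in `u` it is the convex function `x ↦ x ^ p` (for `p ≥ 1`, on `x ≥ 0`) scaled by
a nonnegative constant, and in `C` or `L` it is a nonnegative multiple of the square of an affine
function of that coordinate. Sums of convex functions are convex.
-/

open Set

theorem convexOn_finset_sum {𝕜 E β ι : Type*} [Semiring 𝕜] [PartialOrder 𝕜] [AddCommMonoid E]
    [AddCommMonoid β] [PartialOrder β] [IsOrderedAddMonoid β] [SMul 𝕜 E] [Module 𝕜 β]
    {s : Set E} (t : Finset ι) {f : ι → E → β} (hs : Convex 𝕜 s)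
    (hf : ∀ i ∈ t, ConvexOn 𝕜 s (f i)) : ConvexOn 𝕜 s fun x => ∑ i ∈ t, f i x := by
  simpa only [Finset.sum_fn] using
    Finset.sum_induction f (ConvexOn 𝕜 s) (fun _ _ => ConvexOn.add) (convexOn_const (0 : β) hs) hf

theorem convexOn_univ_mul_sq_sub_mul {c : ℝ} (hc : 0 ≤ c) (a b : ℝ) :
    ConvexOn ℝ univ fun t : ℝ => c * (a - b * t) ^ 2 := by
  simpa using ((Even.convexOn_pow (𝕜 := ℝ) even_two).comp_affineMap
    (AffineMap.const ℝ ℝ a - b • AffineMap.id ℝ ℝ)).smul hc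

namespace DataTerm

variable {ι κ : Type*}

theorem convex_nonneg : Convex ℝ {u : ι → κ → ℝ | ∀ j k, 0 ≤ u j k} :=
  convex_Ici 0

theorem convexOn_rpow_apply_mul {p c : ℝ} (hp : 1 ≤ p) (hc : 0 ≤ c) (j : ι) (k : κ) :
    ConvexOn ℝ {u : ι → κ → ℝ | ∀ j k, 0 ≤ u j k} fun u => u j k ^ p * c := by
  have h := ((convexOn_rpow hp).smul hc).comp_linearMap
    (LinearMap.proj k ∘ₗ LinearMap.proj (R := ℝ) (φ := fun _ : ι => κ → ℝ) j)
  exact (h.subset (fun u (hu : ∀ j k, 0 ≤ u j k) => hu j k) convex_nonneg).congr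
    fun _ _ => mul_comm _ _

variable [Fintype ι] [Fintype κ]

/-- `u j k` is the weight of label `k` at pixel `j`. -/
noncomputable def dataTerm (F : ι → ℝ) (p : ℝ) (u : ι → κ → ℝ) (C : κ → ℝ) (L : ι → ℝ) : ℝ :=
  ∑ k, ∑ j, u j k ^ p * (F j - L j * C k) ^ 2

variable (F : ι → ℝ) {p : ℝ}

theorem convexOn_dataTerm_u (hp : 1 ≤ p) (C : κ → ℝ) (L : ι → ℝ) :
    ConvexOn ℝ {u : ι → κ → ℝ | ∀ j k, 0 ≤ u j k} fun u => dataTerm F p u C L :=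
  convexOn_finset_sum _ convex_nonneg fun k _ => convexOn_finset_sum _ convex_nonneg fun j _ =>
    convexOn_rpow_apply_mul hp (sq_nonneg (F j - L j * C k)) j k

theorem convexOn_dataTerm_C {u : ι → κ → ℝ} (hu : ∀ j k, 0 ≤ u j k) (L : ι → ℝ) :
    ConvexOn ℝ univ fun C => dataTerm F p u C L :=
  convexOn_finset_sum _ convex_univ fun k _ => convexOn_finset_sum _ convex_univ fun j _ =>
    (convexOn_univ_mul_sq_sub_mul (Real.rpow_nonneg (hu j k) p) (F j) (L j)).comp_linearMap
      (LinearMap.proj k : (κ → ℝ) →ₗ[ℝ] ℝ)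

theorem convexOn_dataTerm_L {u : ι → κ → ℝ} (hu : ∀ j k, 0 ≤ u j k) (C : κ → ℝ) :
    ConvexOn ℝ univ fun L => dataTerm F p u C L :=
  convexOn_finset_sum _ convex_univ fun k _ => convexOn_finset_sum _ convex_univ fun j _ =>
    ((convexOn_univ_mul_sq_sub_mul (Real.rpow_nonneg (hu j k) p) (F j) (C k)).comp_linearMap
      (LinearMap.proj j : (ι → ℝ) →ₗ[ℝ] ℝ)).congr fun L _ => by simp [mul_comm]

end DataTerm

open DataTerm in
theorem dataTerm_triconvex_general (d K : ℕ) (n : Fin d → ℕ)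
    (F : (∀ i, Fin (n i)) → ℝ) (p : ℝ) (hp : 1 ≤ p) :
    (∀ (C : Fin K → ℝ) (L : (∀ i, Fin (n i)) → ℝ),
      ConvexOn ℝ {u : (∀ i, Fin (n i)) → Fin K → ℝ | ∀ j k, 0 ≤ u j k}
        (fun u => ∑ k, ∑ j, u j k ^ p * (F j - L j * C k) ^ 2)) ∧
    (∀ (u : (∀ i, Fin (n i)) → Fin K → ℝ), (∀ j k, 0 ≤ u j k) →
      ∀ L : (∀ i, Fin (n i)) → ℝ,
      ConvexOn ℝ (Set.univ : Set (Fin K → ℝ))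
        (fun C => ∑ k, ∑ j, u j k ^ p * (F j - L j * C k) ^ 2)) ∧
    (∀ (u : (∀ i, Fin (n i)) → Fin K → ℝ), (∀ j k, 0 ≤ u j k) →
      ∀ C : Fin K → ℝ,
      ConvexOn ℝ (Set.univ : Set ((∀ i, Fin (n i)) → ℝ))
        (fun L => ∑ k, ∑ j, u j k ^ p * (F j - L j * C k) ^ 2)) :=
  ⟨convexOn_dataTerm_u F hp, fun _ hu => convexOn_dataTerm_C F hu,
    fun _ hu => convexOn_dataTerm_L F hu⟩

/-- The non-logarithmic data term
`𝓔_data(u,C,L) = Σ_k Σ_j u_k(j)^p (F(j) − L(j)C_k)²` (with real exponent `p ≥ 1`) is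
triconvex: convex in `u` on the nonnegative orthant for fixed `(C,L)`, convex in `C` for
fixed nonnegative `u` and fixed `L`, and convex in `L` for fixed nonnegative `u` and
fixed `C`. -/
theorem dataTerm_triconvex (d K : ℕ) (hK : 1 ≤ K) (n : Fin d → ℕ)
    (F : (∀ i, Fin (n i)) → ℝ) (p : ℝ) (hp : 1 ≤ p) :
    (∀ (C : Fin K → ℝ) (L : (∀ i, Fin (n i)) → ℝ),
      ConvexOn ℝ {u : (∀ i, Fin (n i)) → Fin K → ℝ | ∀ j k, 0 ≤ u j k}
        (fun u => ∑ k, ∑ j, u j k ^ p * (F j - L j * C k) ^ 2)) ∧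
    (∀ (u : (∀ i, Fin (n i)) → Fin K → ℝ), (∀ j k, 0 ≤ u j k) →
      ∀ L : (∀ i, Fin (n i)) → ℝ,
      ConvexOn ℝ (Set.univ : Set (Fin K → ℝ))
        (fun C => ∑ k, ∑ j, u j k ^ p * (F j - L j * C k) ^ 2)) ∧
    (∀ (u : (∀ i, Fin (n i)) → Fin K → ℝ), (∀ j k, 0 ≤ u j k) →
      ∀ C : Fin K → ℝ,
      ConvexOn ℝ (Set.univ : Set ((∀ i, Fin (n i)) → ℝ))
        (fun L => ∑ k, ∑ j, u j k ^ p * (F j - L j * C k) ^ 2)) :=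
  dataTerm_triconvex_general d K n F p hp
end
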